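/- Let n ≥ 3. The group Aut⁰(G_n) of automorphisms of G_n that restrict to the identity on A_n and induce the identity on W_n = G_n/A_n is exactly t(M_0), the group of translation automorphisms t_𝔞 with 𝔞 a matrix whose diagonal entries are all zero. -/

import Mathlib

/-!
Conjugation by `x_i` fixes `x_i²` and inverts every `x_j²` with `j ≠ i`, and these squares commute;
hence `(x_i a_i)² = x_i² · x_i^{4 a_ii}`, so `t_𝔞` fixes the generators `x_i²` of `A_n` exactly when
the diagonal of `𝔞` vanishes. To detect `a_ii` one maps `G_n` to the infinite dihedral group,
sending `x_i` to a rotation of infinite order and every other `x_j` to a reflection. Conversely, an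
automorphism inducing the identity on `W_n` moves each `x_i` inside `x_i A_n`, and since `A_n` is
abelian and generated by the `x_j²`, every element of `A_n` has the form `a_i` for some row.
-/

def HWrels (n : ℕ) : Set (FreeGroup (Fin n)) :=
  {r | ∃ i j : Fin n, i ≠ j ∧
    r = (FreeGroup.of i)⁻¹ * FreeGroup.of j ^ 2 * FreeGroup.of i * FreeGroup.of j ^ 2}

abbrev HW (n : ℕ) : Type := PresentedGroup (HWrels n)

def x (n : ℕ) (i : Fin n) : HW n := PresentedGroup.of i

def A (n : ℕ) : Subgroup (HW n) := Subgroup.closure (Set.range fun i => x n i ^ 2)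

theorem HW.relation (n : ℕ) {i j : Fin n} (h : i ≠ j) :
    (x n i)⁻¹ * x n j ^ 2 * x n i * x n j ^ 2 = 1 := by
  have hr : ((FreeGroup.of i)⁻¹ * FreeGroup.of j ^ 2 * FreeGroup.of i * FreeGroup.of j ^ 2)
      ∈ HWrels n := ⟨i, j, h, rfl⟩
  have h2 : PresentedGroup.mk (HWrels n)
      ((FreeGroup.of i)⁻¹ * FreeGroup.of j ^ 2 * FreeGroup.of i * FreeGroup.of j ^ 2) = 1 :=
    (QuotientGroup.eq_one_iff _).mpr (Subgroup.subset_normalClosure hr)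
  rw [map_mul, map_mul, map_mul, map_inv, map_pow] at h2
  exact h2

theorem HW.conj_sq_mem (n : ℕ) (k j : Fin n) :
    x n k * x n j ^ 2 * (x n k)⁻¹ ∈ A n ∧ (x n k)⁻¹ * x n j ^ 2 * x n k ∈ A n := by
  have hj : x n j ^ 2 ∈ A n := Subgroup.subset_closure ⟨j, rfl⟩
  by_cases h : k = j
  · subst h
    have e1 : x n k * x n k ^ 2 * (x n k)⁻¹ = x n k ^ 2 := by group
    have e2 : (x n k)⁻¹ * x n k ^ 2 * x n k = x n k ^ 2 := by group
    rw [e1, e2]; exact ⟨hj, hj⟩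
  · have hrel := HW.relation n h
    have e2 : (x n k)⁻¹ * x n j ^ 2 * x n k = (x n j ^ 2)⁻¹ :=
      mul_eq_one_iff_eq_inv.mp hrel
    have h3 : x n j ^ 2 = x n k * (x n j ^ 2)⁻¹ * (x n k)⁻¹ := by
      rw [← e2]; group
    have e1 : x n k * x n j ^ 2 * (x n k)⁻¹ = (x n j ^ 2)⁻¹ := by
      calc x n k * x n j ^ 2 * (x n k)⁻¹
          = (x n k * (x n j ^ 2)⁻¹ * (x n k)⁻¹)⁻¹ := by group
        _ = (x n j ^ 2)⁻¹ := by rw [← h3]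
    rw [e1, e2]
    exact ⟨Subgroup.inv_mem _ hj, Subgroup.inv_mem _ hj⟩

instance A_normal (n : ℕ) : (A n).Normal := by
  let K : Subgroup (HW n) :=
    { carrier := {g | (∀ a ∈ A n, g * a * g⁻¹ ∈ A n) ∧ (∀ a ∈ A n, g⁻¹ * a * g ∈ A n)}
      one_mem' := by simp
      mul_mem' := by
        rintro g h ⟨hg1, hg2⟩ ⟨hh1, hh2⟩
        constructor
        · intro a ha
          have := hg1 _ (hh1 a ha)
          have e : g * (h * a * h⁻¹) * g⁻¹ = g * h * a * (g * h)⁻¹ := by group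
          rwa [e] at this
        · intro a ha
          have := hh2 _ (hg2 a ha)
          have e : h⁻¹ * (g⁻¹ * a * g) * h = (g * h)⁻¹ * a * (g * h) := by group
          rwa [e] at this
      inv_mem' := by
        rintro g ⟨hg1, hg2⟩
        constructor
        · intro a ha
          have := hg2 a ha
          have e : g⁻¹ * a * g = g⁻¹ * a * g⁻¹⁻¹ := by group
          rwa [e] at this
        · intro a ha
          have := hg1 a ha
          have e : g * a * g⁻¹ = g⁻¹⁻¹ * a * g⁻¹ := by group
          rwa [e] at this }
  have hgen : ∀ j : Fin n, PresentedGroup.of (rels := HWrels n) j ∈ K := by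
    intro j
    show (∀ a ∈ A n, x n j * a * (x n j)⁻¹ ∈ A n) ∧ (∀ a ∈ A n, (x n j)⁻¹ * a * x n j ∈ A n)
    constructor
    · intro a ha
      refine Subgroup.closure_induction ?_ ?_ ?_ ?_ ha
      · rintro b ⟨i, rfl⟩
        exact (HW.conj_sq_mem n j i).1
      · simpa using Subgroup.one_mem (A n)
      · intro b c _ _ hb hc
        have e : x n j * (b * c) * (x n j)⁻¹
            = (x n j * b * (x n j)⁻¹) * (x n j * c * (x n j)⁻¹) := by group
        rw [e]; exact Subgroup.mul_mem _ hb hc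
      · intro b _ hb
        have e : x n j * b⁻¹ * (x n j)⁻¹ = (x n j * b * (x n j)⁻¹)⁻¹ := by group
        rw [e]; exact Subgroup.inv_mem _ hb
    · intro a ha
      refine Subgroup.closure_induction ?_ ?_ ?_ ?_ ha
      · rintro b ⟨i, rfl⟩
        exact (HW.conj_sq_mem n j i).2
      · simpa using Subgroup.one_mem (A n)
      · intro b c _ _ hb hc
        have e : (x n j)⁻¹ * (b * c) * x n j
            = ((x n j)⁻¹ * b * x n j) * ((x n j)⁻¹ * c * x n j) := by group
        rw [e]; exact Subgroup.mul_mem _ hb hc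
      · intro b _ hb
        have e : (x n j)⁻¹ * b⁻¹ * x n j = ((x n j)⁻¹ * b * x n j)⁻¹ := by group
        rw [e]; exact Subgroup.inv_mem _ hb
  constructor
  intro a ha g
  exact ((PresentedGroup.generated_by (HWrels n) K hgen g).1) a ha

/-- A type synonym for `M = M_n(ℤ)`, carrying the monoid structure given by
`𝔞 * 𝔟 = [c_ij]` with `c_ij = a_ij + (1 + 2 a_jj) b_ij`. -/
def MM (n : ℕ) : Type := Matrix (Fin n) (Fin n) ℤ

instance (n : ℕ) : Mul (MM n) :=
  ⟨fun 𝔞 𝔟 i j => 𝔞 i j + (1 + 2 * 𝔞 j j) * 𝔟 i j⟩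

instance (n : ℕ) : One (MM n) := ⟨fun _ _ => (0 : ℤ)⟩

theorem MM.mul_apply {n : ℕ} (𝔞 𝔟 : MM n) (i j : Fin n) :
    (𝔞 * 𝔟) i j = 𝔞 i j + (1 + 2 * 𝔞 j j) * 𝔟 i j := rfl

theorem MM.one_apply {n : ℕ} (i j : Fin n) : (1 : MM n) i j = 0 := rfl

theorem MM.ext {n : ℕ} {𝔞 𝔟 : MM n} (h : ∀ i j, 𝔞 i j = 𝔟 i j) : 𝔞 = 𝔟 :=
  funext fun i => funext fun j => h i j

instance (n : ℕ) : Monoid (MM n) where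
  mul_assoc a b c := MM.ext fun i j => by
    simp only [MM.mul_apply]; ring
  one_mul a := MM.ext fun i j => by simp only [MM.mul_apply, MM.one_apply]; ring
  mul_one a := MM.ext fun i j => by simp only [MM.mul_apply, MM.one_apply]; ring

/-- For an `n × n` integer matrix `𝔞 = [a_ij]`, the element
`a_i = (x_1²)^{a_i1} ⋯ (x_n²)^{a_in}` of `A_n ≤ G_n`. -/
def aElt (n : ℕ) (𝔞 : MM n) (i : Fin n) : HW n :=
  ((List.finRange n).map fun j => (x n j ^ 2) ^ 𝔞 i j).prod

abbrev Wq (n : ℕ) : Type := HW n ⧸ A n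

open Subgroup in
open scoped IsMulCommutative in
theorem Subgroup.exists_eq_list_prod_zpow_of_mem_closure_range {G : Type*} [Group G] {n : ℕ}
    (s : Fin n → G) (hcomm : ∀ i j, Commute (s i) (s j)) {g : G}
    (hg : g ∈ closure (Set.range s)) :
    ∃ m : Fin n → ℤ, g = ((List.finRange n).map fun j => s j ^ m j).prod := by
  let H := closure (Set.range s)
  have : IsMulCommutative H := isMulCommutative_closure <| by
    rintro _ ⟨i, rfl⟩ _ ⟨j, rfl⟩
    exact hcomm i j
  let t : Fin n → H := fun j => ⟨s j, subset_closure (Set.mem_range_self j)⟩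
  have ht : Set.range t = ((↑) : H → G) ⁻¹' Set.range s := by
    ext ⟨h, _⟩
    simp [t, Subtype.ext_iff]
  obtain ⟨m, hm⟩ := (mem_closure_range_iff_of_fintype (f := t) (x := ⟨g, hg⟩)).1 <| by
    rw [ht, closure_closure_coe_preimage]; exact mem_top _
  refine ⟨m, ?_⟩
  have := congrArg H.subtype hm
  rwa [Fin.prod_univ_def, map_list_prod, List.map_map] at this

theorem List.prod_map_zpow_eq_zpow_sum {G ι : Type*} [Group G] (g : G) (f : ι → ℤ)
    (l : List ι) :
    (l.map fun j => g ^ f j).prod = g ^ (l.map f).sum := by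
  induction l with
  | nil => simp
  | cons a l ih => simp [ih, zpow_add]

namespace HW

open DihedralGroup

variable {n : ℕ}

theorem x_sq_mem_A (i : Fin n) : x n i ^ 2 ∈ A n := Subgroup.subset_closure ⟨i, rfl⟩

theorem aElt_mem_A (𝔞 : MM n) (i : Fin n) : aElt n 𝔞 i ∈ A n := by
  unfold aElt
  refine list_prod_mem ?_
  simp only [List.mem_map]
  rintro _ ⟨j, -, rfl⟩
  exact zpow_mem (x_sq_mem_A j) _

theorem inv_x_mul_x_sq_mul_x {i j : Fin n} (h : i ≠ j) :
    (x n i)⁻¹ * x n j ^ 2 * x n i = (x n j ^ 2)⁻¹ :=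
  mul_eq_one_iff_eq_inv.mp (HW.relation n h)

theorem commute_x_sq (i j : Fin n) : Commute (x n i ^ 2) (x n j ^ 2) := by
  rcases eq_or_ne i j with rfl | h
  · exact Commute.refl _
  have hconj := inv_x_mul_x_sq_mul_x h
  have hconj_inv : (x n i)⁻¹ * (x n j ^ 2)⁻¹ * x n i = x n j ^ 2 :=
    calc (x n i)⁻¹ * (x n j ^ 2)⁻¹ * x n i = ((x n i)⁻¹ * x n j ^ 2 * x n i)⁻¹ := by group
      _ = x n j ^ 2 := by rw [hconj, inv_inv]
  have hfix : (x n i ^ 2)⁻¹ * x n j ^ 2 * x n i ^ 2 = x n j ^ 2 :=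
    calc (x n i ^ 2)⁻¹ * x n j ^ 2 * x n i ^ 2
        = (x n i)⁻¹ * ((x n i)⁻¹ * x n j ^ 2 * x n i) * x n i := by rw [sq (x n i)]; group
      _ = x n j ^ 2 := by rw [hconj, hconj_inv]
  calc x n i ^ 2 * x n j ^ 2 = x n i ^ 2 * ((x n i ^ 2)⁻¹ * x n j ^ 2 * x n i ^ 2) := by
        rw [hfix]
    _ = x n j ^ 2 * x n i ^ 2 := by group

instance : IsMulCommutative (A n) :=
  Subgroup.isMulCommutative_closure <| by
    rintro _ ⟨i, rfl⟩ _ ⟨j, rfl⟩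
    exact commute_x_sq i j

theorem exists_aElt_eq {f : Fin n → HW n} (hf : ∀ i, f i ∈ A n) :
    ∃ 𝔞 : MM n, ∀ i, f i = aElt n 𝔞 i := by
  choose 𝔞 h𝔞 using fun i =>
    Subgroup.exists_eq_list_prod_zpow_of_mem_closure_range _ commute_x_sq (hf i)
  exact ⟨𝔞, h𝔞⟩

theorem inv_x_mul_mul_x_of_mem_closure {i : Fin n} {a : HW n}
    (ha : a ∈ Subgroup.closure ((fun j => x n j ^ 2) '' {i}ᶜ)) :
    (x n i)⁻¹ * a * x n i = a⁻¹ := by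
  have hA : Subgroup.closure ((fun j => x n j ^ 2) '' {i}ᶜ) ≤ A n :=
    Subgroup.closure_mono (Set.image_subset_range _ _)
  induction ha using Subgroup.closure_induction with
  | mem _ hb =>
    obtain ⟨j, hj, rfl⟩ := hb
    exact inv_x_mul_x_sq_mul_x (Ne.symm hj)
  | one => group
  | mul b c hb hc ihb ihc =>
    calc (x n i)⁻¹ * (b * c) * x n i
        = ((x n i)⁻¹ * b * x n i) * ((x n i)⁻¹ * c * x n i) := by group
      _ = (c * b)⁻¹ := by rw [ihb, ihc, mul_inv_rev]
      _ = (b * c)⁻¹ := by rw [setLike_mul_comm (hA hc) (hA hb)]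
  | inv b _ ihb =>
    calc (x n i)⁻¹ * b⁻¹ * x n i = ((x n i)⁻¹ * b * x n i)⁻¹ := by group
      _ = b⁻¹⁻¹ := by rw [ihb]

theorem aElt_mem_closure_of_diag_eq_zero {𝔞 : MM n} {i : Fin n} (h : 𝔞 i i = 0) :
    aElt n 𝔞 i ∈ Subgroup.closure ((fun j => x n j ^ 2) '' {i}ᶜ) := by
  unfold aElt
  refine list_prod_mem ?_
  simp only [List.mem_map]
  rintro _ ⟨j, -, rfl⟩
  rcases eq_or_ne j i with rfl | hj
  · rw [h, zpow_zero]; exact one_mem _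
  · exact zpow_mem (Subgroup.subset_closure (Set.mem_image_of_mem _ hj)) _

theorem x_mul_aElt_sq_of_diag_eq_zero {𝔞 : MM n} {i : Fin n} (h : 𝔞 i i = 0) :
    (x n i * aElt n 𝔞 i) ^ 2 = x n i ^ 2 :=
  calc (x n i * aElt n 𝔞 i) ^ 2
      = x n i ^ 2 * (((x n i)⁻¹ * aElt n 𝔞 i * x n i) * aElt n 𝔞 i) := by
        rw [sq, sq]; group
    _ = x n i ^ 2 := by
      rw [inv_x_mul_mul_x_of_mem_closure (aElt_mem_closure_of_diag_eq_zero h), inv_mul_cancel,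
        mul_one]

def toDihedral (i : Fin n) : HW n →* DihedralGroup 0 :=
  PresentedGroup.toGroup (f := fun j => if j = i then r 1 else sr 0) <| by
    rintro _ ⟨k, l, hkl, rfl⟩
    simp only [map_mul, map_inv, map_pow, FreeGroup.lift_apply_of]
    by_cases hl : l = i
    · subst hl
      simp [hkl, sq]
    · simp only [hl, if_false, sq, sr_mul_self, mul_one, inv_mul_cancel]

theorem toDihedral_x (i j : Fin n) : toDihedral i (x n j) = if j = i then r 1 else sr 0 :=
  PresentedGroup.toGroup.of _

theorem toDihedral_aElt (𝔞 : MM n) (i : Fin n) :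
    toDihedral i (aElt n 𝔞 i) = r 1 ^ (2 * 𝔞 i i) := by
  have hfactor : ∀ j, toDihedral i ((x n j ^ 2) ^ 𝔞 i j) =
      r 1 ^ (if j = i then 2 * 𝔞 i j else 0) := by
    intro j
    rw [map_zpow, map_pow, toDihedral_x]
    split_ifs
    · rw [← zpow_natCast, ← zpow_mul]; rfl
    · simp [sq]
  rw [aElt, map_list_prod, List.map_map, Function.comp_def]
  simp only [hfactor]
  rw [List.prod_map_zpow_eq_zpow_sum, ← Fin.sum_univ_def, Finset.sum_ite_eq' Finset.univ i,
    if_pos (Finset.mem_univ i)]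

theorem diag_eq_zero_of_x_mul_aElt_sq {𝔞 : MM n} {i : Fin n}
    (h : (x n i * aElt n 𝔞 i) ^ 2 = x n i ^ 2) : 𝔞 i i = 0 := by
  have h' := congrArg (toDihedral i) h
  rw [map_pow, map_pow, map_mul, toDihedral_aElt, toDihedral_x, if_pos rfl, ← zpow_one_add,
    ← zpow_natCast, ← zpow_natCast, ← zpow_mul] at h'
  have hinj : Function.Injective fun k : ℤ => (r 1 : DihedralGroup 0) ^ k :=
    injective_zpow_iff_not_isOfFinOrder.2 (orderOf_eq_zero_iff.1 orderOf_r_one)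
  have := hinj h'
  push_cast at this
  omega

end HW

open HW in
theorem stmt17_general (n : ℕ) (α : MulAut (HW n)) :
    ((∀ a ∈ A n, α a = a) ∧
      (∀ g : HW n, (QuotientGroup.mk (α g) : Wq n) = QuotientGroup.mk g)) ↔
    ∃ 𝔞 : MM n, (∀ i, 𝔞 i i = 0) ∧ ∀ i, α (x n i) = x n i * aElt n 𝔞 i := by
  constructor
  · rintro ⟨hfix, hquot⟩
    obtain ⟨𝔞, h𝔞⟩ := exists_aElt_eq fun i => QuotientGroup.eq.1 (hquot (x n i)).symm
    have hα : ∀ i, α (x n i) = x n i * aElt n 𝔞 i := fun i => by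
      rw [← h𝔞, mul_inv_cancel_left]
    refine ⟨𝔞, fun i => diag_eq_zero_of_x_mul_aElt_sq ?_, hα⟩
    rw [← hα, ← map_pow, hfix _ (x_sq_mem_A i)]
  · rintro ⟨𝔞, hdiag, hα⟩
    refine ⟨fun a ha => ?_, fun g => ?_⟩
    · have hgen : Set.EqOn α.toMonoidHom (MonoidHom.id _) (Set.range fun i => x n i ^ 2) := by
        rintro _ ⟨i, rfl⟩
        simp [hα, x_mul_aElt_sq_of_diag_eq_zero (hdiag i)]
      exact MonoidHom.eqOn_closure hgen ha
    · have hW : (QuotientGroup.mk' (A n)).comp α.toMonoidHom = QuotientGroup.mk' (A n) :=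
        PresentedGroup.ext fun i => by
          change QuotientGroup.mk (α (x n i)) = QuotientGroup.mk (x n i)
          rw [hα, QuotientGroup.mk_mul_of_mem _ (aElt_mem_A 𝔞 i)]
      exact DFunLike.congr_fun hW g

/-- Lemma `aut-0`: for `n ≥ 3`, an automorphism of `G_n` restricts to the
identity on `A_n` and induces the identity on `W_n = G_n/A_n` if and only if it is a
translation automorphism `t_𝔞` with `𝔞` having zero diagonal, i.e. `Aut⁰(G_n) = t(M_0)`. -/
theorem stmt17 (n : ℕ) (hn : 3 ≤ n) (α : MulAut (HW n)) :
    ((∀ a ∈ A n, α a = a) ∧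
      (∀ g : HW n, (QuotientGroup.mk (α g) : Wq n) = QuotientGroup.mk g)) ↔
    ∃ 𝔞 : MM n, (∀ i, 𝔞 i i = 0) ∧ ∀ i, α (x n i) = x n i * aElt n 𝔞 i :=
  stmt17_general n α
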